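/- arXiv:2201.00106 — 5 statements merged into one kernel-verified Lean document; each statement's English description precedes it below -/
import Mathlib

section
/- Let c > 0 and define k : G → ℝ by the everywhere-convergent series k(x,ζ) = −c x ∑_{i=0}^∞ (c (x² − ζ²))^i / (2^{2i+1} · i! · (i+1)!). Then k is twice continuously differentiable on G and satisfies: k_{xx}(x,ζ) − k_{ζζ}(x,ζ) = c · k(x,ζ) for all (x,ζ) in the interior of G, k_ζ(x,0) = 0 for all x ∈ [0,1], and k(x,x) = −(c/2) x for all x ∈ [0,1]. (This is the kernel equation with a ≡ 0; the series equals −c x · I₁(√(c(x²−ζ²)))/√(c(x²−ζ²)) with I₁ the first-order modified Bessel function I₁(ϖ) = ∑_{i=0}^∞ ϖ^{2i+1}/(2^{2i+1} i! (i+1)!).) -/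
open Set

/-- The closed triangle `G = {(x,ζ) : 0 ≤ ζ ≤ x ≤ 1}`. -/
def G : Set (ℝ × ℝ) := {p | 0 ≤ p.2 ∧ p.2 ≤ p.1 ∧ p.1 ≤ 1}

/-- The explicit Bessel-series kernel
`k(x,ζ) = -c x ∑_{i=0}^∞ (c(x²-ζ²))^i / (2^{2i+1} i! (i+1)!)`,
i.e. `k(x,ζ) = -c x · I₁(√(c(x²-ζ²)))/√(c(x²-ζ²))`. -/
noncomputable def besselKernel (c : ℝ) (x ζ : ℝ) : ℝ :=
  -(c * x) * ∑' i : ℕ,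
    (c * (x ^ 2 - ζ ^ 2)) ^ i /
      ((2:ℝ) ^ (2 * i + 1) * (Nat.factorial i) * (Nat.factorial (i + 1)))

/-!
With `u = c(x² - ζ²)` the kernel is `k = -c x · F(u)` for the entire function
`F(u) = ∑ aₙ uⁿ`, `aₙ = 1 / (2^{2n+1} n! (n+1)!)`. The coefficient recursion
`aₙ = 4(n+1)(n+2) aₙ₊₁` is the ODE `F = 8F' + 4uF''`. The chain rule gives
`k_xx - k_ζζ = -c x · c (8F'(u) + 4u F''(u))`, which is `c k` by the ODE; the boundary
conditions come from `∂_ζ u = -2cζ` and `F(0) = a₀ = 1/2`.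
-/

open FormalMultilinearSeries Nat
open scoped ENNReal

section EntirePowerSeries

variable {𝕜 : Type*} [NontriviallyNormedField 𝕜] {f : 𝕜 → 𝕜} {b : ℕ → 𝕜}

theorem HasFPowerSeriesOnBall.deriv_ofScalars [CompleteSpace 𝕜] {x : 𝕜} {r : ℝ≥0∞}
    (h : HasFPowerSeriesOnBall f (ofScalars 𝕜 b) x r) :
    HasFPowerSeriesOnBall (deriv f) (ofScalars 𝕜 fun n ↦ (n + 1) * b (n + 1)) x r := by
  convert! (ContinuousLinearMap.apply 𝕜 𝕜 (1 : 𝕜)).comp_hasFPowerSeriesOnBall h.fderiv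
  ext n
  simp [coeff_ofScalars]

theorem HasFPowerSeriesOnBall.hasSum_ofScalars_of_radius_top
    (h : HasFPowerSeriesOnBall f (ofScalars 𝕜 b) 0 ∞) (u : 𝕜) :
    HasSum (fun n ↦ b n * u ^ n) (f u) := by
  simpa [ofScalars_apply_eq, mul_comm] using h.hasSum (y := u) (by simp)

theorem HasFPowerSeriesOnBall.contDiff_of_radius_top {E F : Type*} [NormedAddCommGroup E]
    [NormedSpace 𝕜 E] [NormedAddCommGroup F] [NormedSpace 𝕜 F] [CompleteSpace F] {g : E → F}
    {p : FormalMultilinearSeries 𝕜 E F} {x : E} (h : HasFPowerSeriesOnBall g p x ∞)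
    {n : WithTop ℕ∞} : ContDiff 𝕜 n g :=
  AnalyticOnNhd.contDiff fun _ _ ↦ h.analyticAt_of_mem (by simp)

end EntirePowerSeries

noncomputable def besselCoef (n : ℕ) : ℝ :=
  ((2 : ℝ) ^ (2 * n + 1) * n ! * (n + 1) !)⁻¹

theorem besselCoef_eq_mul_besselCoef_succ (n : ℕ) :
    besselCoef n = 4 * (n + 1) * (n + 2) * besselCoef (n + 1) := by
  simp only [besselCoef, factorial_succ (n + 1), factorial_succ n, Nat.mul_add_one 2 n,
    pow_add]
  push_cast
  field_simp
  ring

theorem besselCoef_le_inv_factorial (n : ℕ) : besselCoef n ≤ (n ! : ℝ)⁻¹ := by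
  have h2 : (1 : ℝ) ≤ 2 ^ (2 * n + 1) := one_le_pow₀ (by norm_num)
  have hfac : (1 : ℝ) ≤ (n + 1) ! := by exact_mod_cast (n + 1).factorial_pos
  refine inv_anti₀ (by positivity) ?_
  calc (n ! : ℝ) = 1 * n ! * 1 := by ring
    _ ≤ 2 ^ (2 * n + 1) * n ! * (n + 1) ! := by gcongr

theorem radius_ofScalars_besselCoef : (ofScalars ℝ besselCoef).radius = ∞ := by
  refine top_le_iff.mp
    (NormedSpace.expSeries_radius_eq_top ℝ ℝ ▸ radius_le_of_le fun n ↦ ?_)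
  rw [NormedSpace.expSeries_eq_ofScalars, ofScalars_norm, ofScalars_norm, Real.norm_of_nonneg
    (by unfold besselCoef; positivity), Real.norm_of_nonneg (by positivity)]
  exact besselCoef_le_inv_factorial n

/-- `besselProfile u = I₁(√u)/√u` for `u > 0`. -/
noncomputable def besselProfile : ℝ → ℝ := ofScalarsSum besselCoef

theorem hasFPowerSeriesOnBall_besselProfile :
    HasFPowerSeriesOnBall besselProfile (ofScalars ℝ besselCoef) 0 ∞ :=
  radius_ofScalars_besselCoef ▸ (ofScalars ℝ besselCoef).hasFPowerSeriesOnBall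
    (radius_ofScalars_besselCoef ▸ ENNReal.zero_lt_top)

theorem hasSum_besselProfile (u : ℝ) :
    HasSum (fun i : ℕ ↦ u ^ i / ((2 : ℝ) ^ (2 * i + 1) * i ! * (i + 1) !))
      (besselProfile u) := by
  simpa only [besselCoef, ← div_eq_inv_mul] using
    hasFPowerSeriesOnBall_besselProfile.hasSum_ofScalars_of_radius_top u

theorem besselKernel_eq (c x ζ : ℝ) :
    besselKernel c x ζ = -(c * x) * besselProfile (c * (x ^ 2 - ζ ^ 2)) := by
  rw [besselKernel, (hasSum_besselProfile _).tsum_eq]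

theorem besselProfile_zero : besselProfile 0 = 1 / 2 := by
  simp [besselProfile, ofScalarsSum_zero, besselCoef]

theorem besselProfile_ode (u : ℝ) :
    besselProfile u = 8 * deriv besselProfile u + 4 * u * deriv (deriv besselProfile) u := by
  have h₁ := hasFPowerSeriesOnBall_besselProfile.deriv_ofScalars
  have hD := h₁.hasSum_ofScalars_of_radius_top u
  -- `u F''(u) = ∑ₙ n (n+1) aₙ₊₁ uⁿ`, the `n = 0` term being zero
  have hUD : HasSum (fun n : ℕ ↦ n * ((n + 1) * besselCoef (n + 1)) * u ^ n)
      (u * deriv (deriv besselProfile) u) := by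
    refine (hasSum_nat_add_iff' 1).mp ?_
    simpa [pow_succ, mul_assoc, mul_comm, mul_left_comm] using
      (h₁.deriv_ofScalars.hasSum_ofScalars_of_radius_top u).mul_left u
  have hterm (n : ℕ) : besselCoef n * u ^ n = 8 * ((n + 1) * besselCoef (n + 1) * u ^ n)
      + 4 * (n * ((n + 1) * besselCoef (n + 1)) * u ^ n) := by
    rw [besselCoef_eq_mul_besselCoef_succ]; ring
  refine (hasFPowerSeriesOnBall_besselProfile.hasSum_ofScalars_of_radius_top u).unique ?_
  rw [funext hterm, mul_assoc 4]
  exact (hD.mul_left 8).add (hUD.mul_left 4)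

theorem contDiff_besselProfile {n : WithTop ℕ∞} : ContDiff ℝ n besselProfile :=
  hasFPowerSeriesOnBall_besselProfile.contDiff_of_radius_top

theorem differentiable_besselProfile : Differentiable ℝ besselProfile :=
  contDiff_besselProfile.differentiable one_ne_zero

theorem differentiable_deriv_besselProfile : Differentiable ℝ (deriv besselProfile) :=
  (hasFPowerSeriesOnBall_besselProfile.deriv_ofScalars.contDiff_of_radius_top
    (n := 1)).differentiable one_ne_zero

theorem hasDerivAt_comp_mul_sq_sub {g : ℝ → ℝ} (hg : Differentiable ℝ g) (c a t : ℝ) :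
    HasDerivAt (fun s ↦ g (c * (s ^ 2 - a))) (2 * c * t * deriv g (c * (t ^ 2 - a))) t :=
  ((hg _).hasDerivAt.comp t (((hasDerivAt_pow 2 t).sub_const a).const_mul c)).congr_deriv
    (by ring)

theorem hasDerivAt_comp_mul_sub_sq {g : ℝ → ℝ} (hg : Differentiable ℝ g) (c a t : ℝ) :
    HasDerivAt (fun s ↦ g (c * (a - s ^ 2))) (-2 * c * t * deriv g (c * (a - t ^ 2))) t :=
  ((hg _).hasDerivAt.comp t (((hasDerivAt_pow 2 t).const_sub a).const_mul c)).congr_deriv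
    (by ring)

theorem deriv_deriv_besselKernel_fst (c x ζ : ℝ) :
    deriv (deriv fun s ↦ besselKernel c s ζ) x =
      -6 * c ^ 2 * x * deriv besselProfile (c * (x ^ 2 - ζ ^ 2))
        - 4 * c ^ 3 * x ^ 3 * deriv (deriv besselProfile) (c * (x ^ 2 - ζ ^ 2)) := by
  have hlin (s : ℝ) : HasDerivAt (fun s ↦ -(c * s)) (-c) s :=
    ((hasDerivAt_id s).const_mul c).neg.congr_deriv (by ring)
  have hF (s : ℝ) := hasDerivAt_comp_mul_sq_sub differentiable_besselProfile c (ζ ^ 2) s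
  have hF' := hasDerivAt_comp_mul_sq_sub differentiable_deriv_besselProfile c (ζ ^ 2) x
  have hk : deriv (fun s ↦ besselKernel c s ζ) = fun s ↦
      -(c * besselProfile (c * (s ^ 2 - ζ ^ 2)))
        + -(c * s) * (2 * c * s * deriv besselProfile (c * (s ^ 2 - ζ ^ 2))) := by
    simp_rw [besselKernel_eq]
    exact funext fun s ↦ ((hlin s).mul (hF s)).deriv.trans (by ring)
  rw [hk]
  exact (((hF x).const_mul c).neg.add ((hlin x).mul
    (((hasDerivAt_id' x).const_mul (2 * c)).mul hF'))).deriv.trans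
    (by simp only [Pi.mul_apply]; ring)

theorem deriv_besselKernel_snd (c x : ℝ) :
    deriv (fun s ↦ besselKernel c x s) =
      fun ζ ↦ 2 * c ^ 2 * x * ζ * deriv besselProfile (c * (x ^ 2 - ζ ^ 2)) := by
  simp_rw [besselKernel_eq]
  exact funext fun ζ ↦
    ((hasDerivAt_comp_mul_sub_sq differentiable_besselProfile c _ ζ).const_mul _).deriv.trans
      (by ring)

theorem deriv_deriv_besselKernel_snd (c x ζ : ℝ) :
    deriv (deriv fun s ↦ besselKernel c x s) ζ =
      2 * c ^ 2 * x * deriv besselProfile (c * (x ^ 2 - ζ ^ 2))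
        - 4 * c ^ 3 * x * ζ ^ 2 * deriv (deriv besselProfile) (c * (x ^ 2 - ζ ^ 2)) := by
  rw [deriv_besselKernel_snd]
  exact (((hasDerivAt_id' ζ).const_mul (2 * c ^ 2 * x)).mul
    (hasDerivAt_comp_mul_sub_sq differentiable_deriv_besselProfile c _ ζ)).deriv.trans (by ring)

theorem besselKernel_wave_equation (c x ζ : ℝ) :
    deriv (deriv fun s ↦ besselKernel c s ζ) x - deriv (deriv fun s ↦ besselKernel c x s) ζ
      = c * besselKernel c x ζ := by
  rw [deriv_deriv_besselKernel_fst, deriv_deriv_besselKernel_snd, besselKernel_eq,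
    besselProfile_ode (c * (x ^ 2 - ζ ^ 2))]
  ring

theorem contDiff_besselKernel (c : ℝ) {n : WithTop ℕ∞} :
    ContDiff ℝ n fun p : ℝ × ℝ ↦ besselKernel c p.1 p.2 := by
  simp_rw [besselKernel_eq]
  have := contDiff_besselProfile (n := n)
  fun_prop

theorem besselKernel_solves_kernel_equation_general (c : ℝ) :
    (∀ x ζ : ℝ, Summable fun i : ℕ =>
        (c * (x ^ 2 - ζ ^ 2)) ^ i /
          ((2:ℝ) ^ (2 * i + 1) * (Nat.factorial i) * (Nat.factorial (i + 1)))) ∧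
    ContDiffOn ℝ 2 (fun p : ℝ × ℝ => besselKernel c p.1 p.2) G ∧
    (∀ p ∈ interior G,
        deriv (deriv (fun s => besselKernel c s p.2)) p.1
          - deriv (deriv (fun s => besselKernel c p.1 s)) p.2
            = c * besselKernel c p.1 p.2) ∧
    (∀ x ∈ Icc (0:ℝ) 1, deriv (fun s => besselKernel c x s) 0 = 0) ∧
    (∀ x ∈ Icc (0:ℝ) 1, besselKernel c x x = -(c / 2) * x) := by
  refine ⟨fun x ζ ↦ (hasSum_besselProfile _).summable, (contDiff_besselKernel c).contDiffOn,
    fun p _ ↦ besselKernel_wave_equation c p.1 p.2, fun x _ ↦ ?_, fun x _ ↦ ?_⟩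
  · simp [deriv_besselKernel_snd]
  · rw [besselKernel_eq, sub_self, mul_zero, besselProfile_zero]
    ring

/-- The explicit series kernel converges everywhere, is twice continuously
differentiable on `G`, and solves the kernel equations with `a ≡ 0`:
`k_{xx} - k_{ζζ} = c·k` on the interior of `G`, `k_ζ(x,0) = 0` and
`k(x,x) = -(c/2)x` for `x ∈ [0,1]`. -/
theorem besselKernel_solves_kernel_equation (c : ℝ) (hc : 0 < c) :
    (∀ x ζ : ℝ, Summable fun i : ℕ =>
        (c * (x ^ 2 - ζ ^ 2)) ^ i /
          ((2:ℝ) ^ (2 * i + 1) * (Nat.factorial i) * (Nat.factorial (i + 1)))) ∧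
    ContDiffOn ℝ 2 (fun p : ℝ × ℝ => besselKernel c p.1 p.2) G ∧
    (∀ p ∈ interior G,
        deriv (deriv (fun s => besselKernel c s p.2)) p.1
          - deriv (deriv (fun s => besselKernel c p.1 s)) p.2
            = c * besselKernel c p.1 p.2) ∧
    (∀ x ∈ Icc (0:ℝ) 1, deriv (fun s => besselKernel c x s) 0 = 0) ∧
    (∀ x ∈ Icc (0:ℝ) 1, besselKernel c x x = -(c / 2) * x) :=
  besselKernel_solves_kernel_equation_general c
end

section
/- Let n ≥ 1, A ∈ ℝ^{n×n}, C ∈ ℝ^{1×n}, L ∈ ℝ^{n×1}, c ∈ ℝ. Suppose ξ : [0,∞) → ℝⁿ, Z : [0,∞) → ℝ and ϑ : [0,∞) → ℝⁿ are differentiable, u₀ : [0,∞) → ℝ is a function, and they satisfy for all t ≥ 0: ξ'(t) = A ξ(t), Z'(t) = −[(c+π²) Z(t) + u₀(t) + C ξ(t)], and ϑ'(t) = (A+LC) ϑ(t) + (A+LC) L Z(t) + L [(c+π²) Z(t) + u₀(t)]. Define the estimate ξ̂(t) = ϑ(t) + L Z(t) and the estimation error η(t) = ξ̂(t) − ξ(t).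 Then η is differentiable and η'(t) = (A+LC) η(t) for all t ≥ 0. -/
open Set Matrix

variable {m n R : Type*} [Fintype n] [CommRing R]

theorem Matrix.mul_mulVec_of_fin_one (L : Matrix m (Fin 1) R) (C : Matrix (Fin 1) n R)
    (x : n → R) : (L * C) *ᵥ x = (C *ᵥ x) 0 • fun i => L i 0 := by
  rw [← mulVec_mulVec]
  ext i
  simp [mulVec, dotProduct, mul_comm]

/-- The output-injection terms `L (C x)` coming from `Z'` and from `(A + L C) x` cancel, which
is what makes the error dynamics autonomous. -/
theorem observer_error_deriv_eq (A : Matrix n n R) (L : Matrix n (Fin 1) R)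
    (C : Matrix (Fin 1) n R) (ϑ x : n → R) (z v : R) :
    (A + L * C) *ᵥ ϑ + (A + L * C) *ᵥ (z • fun i => L i 0) + v • (fun i => L i 0)
        + (-(v + (C *ᵥ x) 0)) • (fun i => L i 0) - A *ᵥ x
      = (A + L * C) *ᵥ (ϑ + z • (fun i => L i 0) - x) := by
  rw [mulVec_sub, mulVec_add, add_mulVec A (L * C) x, mul_mulVec_of_fin_one]
  module

theorem disturbance_observer_error_dynamics_general
    (n : ℕ)
    (A : Matrix (Fin n) (Fin n) ℝ) (C : Matrix (Fin 1) (Fin n) ℝ)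
    (L : Matrix (Fin n) (Fin 1) ℝ) (c : ℝ)
    (ξ : ℝ → Fin n → ℝ) (Z : ℝ → ℝ) (ϑ : ℝ → Fin n → ℝ) (u₀ : ℝ → ℝ)
    (hξ : ∀ t ∈ Ici (0:ℝ), HasDerivWithinAt ξ (A.mulVec (ξ t)) (Ici 0) t)
    (hZ : ∀ t ∈ Ici (0:ℝ), HasDerivWithinAt Z
      (-((c + Real.pi ^ 2) * Z t + u₀ t + (C.mulVec (ξ t)) 0)) (Ici 0) t)
    (hϑ : ∀ t ∈ Ici (0:ℝ), HasDerivWithinAt ϑ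
      ((A + L * C).mulVec (ϑ t)
        + (A + L * C).mulVec (Z t • fun i => L i 0)
        + ((c + Real.pi ^ 2) * Z t + u₀ t) • fun i => L i 0) (Ici 0) t)
    (ξhat η : ℝ → Fin n → ℝ)
    (hξhat : ξhat = fun t => ϑ t + Z t • fun i => L i 0)
    (hη : η = fun t => ξhat t - ξ t) :
    ∀ t ∈ Ici (0:ℝ), HasDerivWithinAt η ((A + L * C).mulVec (η t)) (Ici 0) t := by
  subst hξhat hη
  intro t ht
  have h := ((hϑ t ht).add ((hZ t ht).smul_const fun i => L i 0)).sub (hξ t ht)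
  rwa [observer_error_deriv_eq] at h

/-- Error dynamics of the finite-dimensional disturbance observer: if
`ξ' = Aξ`, `Z' = −[(c+π²)Z + u₀ + Cξ]` and
`ϑ' = (A+LC)ϑ + (A+LC)L Z + L[(c+π²)Z + u₀]`, then the estimation error
`η = ξ̂ − ξ = (ϑ + L Z) − ξ` satisfies `η' = (A+LC)η` on `[0,∞)`. -/
theorem disturbance_observer_error_dynamics
    (n : ℕ) (hn : 1 ≤ n)
    (A : Matrix (Fin n) (Fin n) ℝ) (C : Matrix (Fin 1) (Fin n) ℝ)
    (L : Matrix (Fin n) (Fin 1) ℝ) (c : ℝ)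
    (ξ : ℝ → Fin n → ℝ) (Z : ℝ → ℝ) (ϑ : ℝ → Fin n → ℝ) (u₀ : ℝ → ℝ)
    (hξ : ∀ t ∈ Ici (0:ℝ), HasDerivWithinAt ξ (A.mulVec (ξ t)) (Ici 0) t)
    (hZ : ∀ t ∈ Ici (0:ℝ), HasDerivWithinAt Z
      (-((c + Real.pi ^ 2) * Z t + u₀ t + (C.mulVec (ξ t)) 0)) (Ici 0) t)
    (hϑ : ∀ t ∈ Ici (0:ℝ), HasDerivWithinAt ϑ
      ((A + L * C).mulVec (ϑ t)
        + (A + L * C).mulVec (Z t • fun i => L i 0)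
        + ((c + Real.pi ^ 2) * Z t + u₀ t) • fun i => L i 0) (Ici 0) t)
    (ξhat η : ℝ → Fin n → ℝ)
    (hξhat : ξhat = fun t => ϑ t + Z t • fun i => L i 0)
    (hη : η = fun t => ξhat t - ξ t) :
    ∀ t ∈ Ici (0:ℝ), HasDerivWithinAt η ((A + L * C).mulVec (η t)) (Ici 0) t :=
  disturbance_observer_error_dynamics_general n A C L c ξ Z ϑ u₀ hξ hZ hϑ ξhat η hξhat hη
end

section
/- Let m ≥ 1 and let M ∈ ℝ^{m×m} be a matrix all of whose complex eigenvalues have negative real part. Then there exists a unique symmetric positive definite matrix Q ∈ ℝ^{m×m} such that Mᵀ Q + Q M = −I_m. -/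
open Matrix Polynomial

/-- A real square matrix is Hurwitz if every complex root of its characteristic
polynomial has negative real part. -/
def IsHurwitz {ι : Type*} [Fintype ι] [DecidableEq ι] (M : Matrix ι ι ℝ) : Prop :=
  ∀ z : ℂ, aeval z M.charpoly = 0 → z.re < 0

/-!
If `Aᵀ Q + Q A = 0` then `Q` intertwines `Aᵀ` and `-A`, so `Q χ_A(-A) = χ_A(Aᵀ) Q = 0`. For Hurwitz
`A` no eigenvalue of `-A` is a root of `χ_A`, so `χ_A(-A)` is invertible and `Q = 0`. Hence the
Lyapunov operator `Q ↦ Aᵀ Q + Q A` is invertible, and the solution `Q_A` of `Aᵀ Q + Q A = -1` is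
symmetric and depends continuously on `A`. A symmetric solution is nonsingular, because `Q x = 0`
gives `-‖x‖² = xᵀ (Aᵀ Q + Q A) x = 0`. So on the set of Hurwitz matrices, which is star-convex
about `-1` and hence connected, `Q_A` cannot pass from positive definite to indefinite, and
`Q_{-1} = 1/2` is positive definite.
-/

open scoped Kronecker

theorem SemiconjBy.aeval {R A : Type*} [CommSemiring R] [Semiring A] [Algebra R A] {q a b : A}
    (h : SemiconjBy q a b) (p : R[X]) : SemiconjBy q (aeval a p) (aeval b p) := by
  induction p using Polynomial.induction_on' with
  | add f g hf hg => simpa only [map_add] using hf.add_right hg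
  | monomial k c =>
    simpa only [aeval_monomial] using
      SemiconjBy.mul_right (Algebra.commutes c q).symm (h.pow_right k)

section

variable {n : Type*} [Fintype n]

lemma isOpen_setOf_forall_dotProduct_mulVec_pos :
    IsOpen {Q : Matrix n n ℝ | ∀ x ≠ 0, 0 < x ⬝ᵥ Q *ᵥ x} := by
  rw [isOpen_iff_eventually]
  intro Q₀ hQ₀
  have hcont : Continuous fun p : Matrix n n ℝ × (n → ℝ) => p.2 ⬝ᵥ p.1 *ᵥ p.2 := by fun_prop
  -- positivity on the compact unit sphere survives small perturbations, and scales to all `x`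
  have hsphere : ∀ᶠ Q in nhds Q₀, ∀ y ∈ Metric.sphere (0 : n → ℝ) 1, 0 < y ⬝ᵥ Q *ᵥ y := by
    refine (isCompact_sphere 0 1).eventually_forall_of_forall_eventually fun y hy => ?_
    have hy0 : y ≠ 0 := by rintro rfl; simp at hy
    exact (hcont.tendsto (Q₀, y)).eventually (lt_mem_nhds (hQ₀ y hy0))
  filter_upwards [hsphere] with Q hQ x hx
  have hpos : 0 < ‖x‖⁻¹ := by positivity
  have := hQ (‖x‖⁻¹ • x) (by simp [norm_smul, hx])
  rw [mulVec_smul, dotProduct_smul, smul_dotProduct, smul_eq_mul, smul_eq_mul] at this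
  exact pos_of_mul_pos_right (pos_of_mul_pos_right this hpos.le) hpos.le

lemma isOpen_setOf_exists_dotProduct_mulVec_neg :
    IsOpen {Q : Matrix n n ℝ | ∃ x, x ⬝ᵥ Q *ᵥ x < 0} := by
  simp only [Set.ofPred_exists]
  exact isOpen_iUnion fun x => isOpen_lt (by fun_prop) continuous_const

end

variable {n : Type*} [DecidableEq n]

-- the matrix of `Q ↦ Aᵀ Q + Q A` in the coordinates `vec Q`
def lyapunovMatrix {R : Type*} [CommRing R] (A : Matrix n n R) : Matrix (n × n) (n × n) R :=
  1 ⊗ₖ Aᵀ + Aᵀ ⊗ₖ 1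

lemma continuous_lyapunovMatrix : Continuous (lyapunovMatrix : Matrix n n ℝ → _) := by
  refine continuous_matrix fun i j => ?_
  simp only [lyapunovMatrix, Matrix.add_apply, kroneckerMap_apply, transpose_apply]
  fun_prop

variable [Fintype n]

lemma Matrix.IsSymm.posDef_or_exists_dotProduct_mulVec_neg {Q : Matrix n n ℝ} (hQ : Q.IsSymm)
    (hdet : Q.det ≠ 0) : Q.PosDef ∨ ∃ x, x ⬝ᵥ Q *ᵥ x < 0 := by
  refine or_iff_not_imp_right.mpr fun h => ?_
  simp only [not_exists, not_lt] at h
  have hpsd : Q.PosSemidef :=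
    .of_dotProduct_mulVec_nonneg (isHermitian_iff_isSymm.mpr hQ) (by simpa using h)
  exact hpsd.posDef_iff_det_ne_zero.mpr hdet

lemma det_ne_zero_of_transpose_mul_add_mul_eq_neg_one {A Q : Matrix n n ℝ} (hQ : Q.IsSymm)
    (h : Aᵀ * Q + Q * A = -1) : Q.det ≠ 0 := by
  intro hdet
  obtain ⟨x, hx, hQx⟩ := exists_mulVec_eq_zero_iff.mpr hdet
  have hxQ : x ᵥ* Q = 0 := by rw [← hQ.eq, vecMul_transpose, hQx]
  have h0 : x ⬝ᵥ (Aᵀ * Q + Q * A) *ᵥ x = 0 := by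
    rw [add_mulVec, ← mulVec_mulVec, ← mulVec_mulVec, hQx, mulVec_zero, zero_add,
      dotProduct_mulVec, hxQ, zero_dotProduct]
  rw [h, neg_mulVec, one_mulVec, dotProduct_neg, neg_eq_zero, dotProduct_self_eq_zero] at h0
  exact hx h0

lemma mem_spectrum_map_complex_iff {A : Matrix n n ℝ} {z : ℂ} :
    z ∈ spectrum ℂ (A.map (algebraMap ℝ ℂ)) ↔ aeval z A.charpoly = 0 := by
  rw [mem_spectrum_iff_isRoot_charpoly, charpoly_map, IsRoot, eval_map, aeval_def]

lemma starConvex_setOf_isHurwitz : StarConvex ℝ (-1) {A : Matrix n n ℝ | IsHurwitz A} := by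
  intro A hA a b ha hb hab z hz
  rw [← mem_spectrum_map_complex_iff] at hz
  have hmap : (a • (-1) + b • A : Matrix n n ℝ).map (algebraMap ℝ ℂ)
      = algebraMap ℂ _ (-a) + (b : ℂ) • A.map (algebraMap ℝ ℂ) := by
    ext i j
    by_cases h : i = j <;> simp [Matrix.algebraMap_matrix_apply, h]
  -- the eigenvalues of `a • (-1) + b • A` are the `b μ - a` with `μ` an eigenvalue of `A`
  rw [hmap, ← add_neg_cancel_right z (a : ℂ), spectrum.add_mem_add_iff] at hz
  rcases hb.eq_or_lt with rfl | hb
  · have hz1 : z + a = 0 := by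
      by_contra h
      rw [Complex.ofReal_zero, zero_smul, spectrum.mem_iff, sub_zero] at hz
      exact hz ((isUnit_iff_ne_zero.mpr h).map _)
    have := congrArg Complex.re hz1
    simp only [Complex.add_re, Complex.ofReal_re, Complex.zero_re] at this
    linarith
  · have hb' : (b : ℂ) ≠ 0 := by exact_mod_cast hb.ne'
    have hw : Units.mk0 (b : ℂ) hb' • ((z + a) / b) ∈
        spectrum ℂ (Units.mk0 (b : ℂ) hb' • A.map (algebraMap ℝ ℂ)) := by
      simpa [Units.smul_def, mul_div_cancel₀ _ hb'] using hz
    rw [spectrum.smul_mem_smul_iff, mem_spectrum_map_complex_iff] at hw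
    have hre : z.re = b * ((z + a) / b).re - a := by
      rw [Complex.div_ofReal_re]; field_simp; simp
    nlinarith [hA _ hw]

lemma IsHurwitz.isUnit_aeval_neg_charpoly {A : Matrix n n ℝ} (hA : IsHurwitz A) :
    IsUnit (aeval (-A) A.charpoly) := by
  cases isEmpty_or_nonempty n
  · exact isUnit_of_subsingleton _
  set Aℂ := A.map (algebraMap ℝ ℂ)
  -- spectral mapping: `0 ∈ σ (χ_A (-Aℂ))` would give roots `μ` and `-μ` of `χ_A`
  have hℂ : IsUnit (aeval (-Aℂ) Aℂ.charpoly) := by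
    rw [← spectrum.zero_notMem_iff ℂ, spectrum.map_polynomial_aeval_of_degree_pos]
    · rintro ⟨μ, hμ, hroot : eval μ Aℂ.charpoly = 0⟩
      rw [← spectrum.neg_eq, Set.mem_neg, mem_spectrum_map_complex_iff] at hμ
      rw [charpoly_map, eval_map, ← aeval_def] at hroot
      have h2 := hA _ hμ
      rw [Complex.neg_re] at h2
      linarith [hA _ hroot]
    · rw [charpoly_degree_eq_dim]
      exact_mod_cast Fintype.card_pos
  have hmap :
      aeval (-Aℂ) Aℂ.charpoly = (Algebra.ofId ℝ ℂ).mapMatrix (aeval (-A) A.charpoly) := by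
    rw [charpoly_map, aeval_map_algebraMap, ← aeval_algHom_apply, map_neg]
    rfl
  rw [hmap, isUnit_iff_isUnit_det, ← AlgHom.map_det, isUnit_map_iff] at hℂ
  rwa [isUnit_iff_isUnit_det]

lemma IsHurwitz.eq_zero_of_transpose_mul_add_mul_eq_zero {A Q : Matrix n n ℝ}
    (hA : IsHurwitz A) (hQ : Aᵀ * Q + Q * A = 0) : Q = 0 := by
  have hsemi : SemiconjBy Q (-A) Aᵀ := by
    rw [SemiconjBy, mul_neg, neg_eq_iff_add_eq_zero, add_comm, hQ]
  have h := (hsemi.aeval A.charpoly).eq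
  rw [← charpoly_transpose, aeval_self_charpoly, zero_mul, charpoly_transpose] at h
  exact hA.isUnit_aeval_neg_charpoly.mul_left_eq_zero.mp h

lemma lyapunovMatrix_mulVec_vec {R : Type*} [CommRing R] (A Q : Matrix n n R) :
    lyapunovMatrix A *ᵥ vec Q = vec (Aᵀ * Q + Q * A) := by
  rw [lyapunovMatrix, add_mulVec, kronecker_mulVec_vec, kronecker_mulVec_vec, transpose_one,
    transpose_transpose, Matrix.mul_one, Matrix.one_mul, vec_add]

lemma injective_of_isUnit_lyapunovMatrix {K : Type*} [Field K] {A : Matrix n n K}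
    (hA : IsUnit (lyapunovMatrix A)) :
    Function.Injective fun Q : Matrix n n K => Aᵀ * Q + Q * A := by
  intro X Y h
  rw [← vec_inj]
  apply mulVec_injective_iff_isUnit.mpr hA
  simp only [lyapunovMatrix_mulVec_vec]
  exact congrArg vec h

lemma IsHurwitz.isUnit_lyapunovMatrix {A : Matrix n n ℝ} (hA : IsHurwitz A) :
    IsUnit (lyapunovMatrix A) := by
  rw [isUnit_iff_isUnit_det, isUnit_iff_ne_zero, Ne, ← exists_mulVec_eq_zero_iff]
  rintro ⟨v, hv, hAv⟩
  obtain ⟨Q, rfl⟩ := vec_bijective.2 v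
  rw [lyapunovMatrix_mulVec_vec, vec_eq_zero_iff] at hAv
  rw [hA.eq_zero_of_transpose_mul_add_mul_eq_zero hAv, vec_zero] at hv
  exact hv rfl

-- `vec` lists the entries column by column, hence the index swap `(j, i)`.
noncomputable def lyapunovSolution (A : Matrix n n ℝ) : Matrix n n ℝ :=
  of fun i j => ((lyapunovMatrix A)⁻¹ *ᵥ vec (-1)) (j, i)

lemma transpose_mul_lyapunovSolution_add {A : Matrix n n ℝ} (hA : IsUnit (lyapunovMatrix A)) :
    Aᵀ * lyapunovSolution A + lyapunovSolution A * A = -1 := by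
  rw [← vec_inj, ← lyapunovMatrix_mulVec_vec]
  change lyapunovMatrix A *ᵥ ((lyapunovMatrix A)⁻¹ *ᵥ vec (-1)) = _
  rw [mulVec_mulVec, mul_nonsing_inv _ ((isUnit_iff_isUnit_det _).mp hA), one_mulVec]

lemma isSymm_lyapunovSolution {A : Matrix n n ℝ} (hA : IsUnit (lyapunovMatrix A)) :
    (lyapunovSolution A).IsSymm := by
  refine injective_of_isUnit_lyapunovMatrix hA ?_
  have h := congrArg transpose (transpose_mul_lyapunovSolution_add hA)
  rw [transpose_add, transpose_mul, transpose_mul, transpose_transpose, transpose_neg,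
    transpose_one, add_comm] at h
  exact h.trans (transpose_mul_lyapunovSolution_add hA).symm

lemma continuousOn_lyapunovSolution :
    ContinuousOn lyapunovSolution {A : Matrix n n ℝ | IsUnit (lyapunovMatrix A)} := by
  intro A hA
  refine ContinuousAt.continuousWithinAt ?_
  have hinv : ContinuousAt Inv.inv (lyapunovMatrix A) := by
    refine continuousAt_matrix_inv _ ?_
    rw [Ring.inverse_eq_inv']
    exact continuousAt_inv₀ ((isUnit_iff_isUnit_det _).mp hA).ne_zero
  have hsol : Continuous fun N : Matrix (n × n) (n × n) ℝ =>
      of fun i j => (N *ᵥ vec (-1 : Matrix n n ℝ)) (j, i) := by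
    fun_prop
  exact hsol.continuousAt.comp (hinv.comp continuous_lyapunovMatrix.continuousAt)

lemma isOpen_setOf_isUnit_lyapunovMatrix :
    IsOpen {A : Matrix n n ℝ | IsUnit (lyapunovMatrix A)} := by
  simp only [isUnit_iff_isUnit_det, isUnit_iff_ne_zero]
  exact isOpen_ne_fun continuous_lyapunovMatrix.matrix_det continuous_const

lemma posDef_or_exists_neg_of_isUnit_lyapunovMatrix {A : Matrix n n ℝ}
    (hA : IsUnit (lyapunovMatrix A)) :
    (lyapunovSolution A).PosDef ∨ ∃ x, x ⬝ᵥ lyapunovSolution A *ᵥ x < 0 :=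
  (isSymm_lyapunovSolution hA).posDef_or_exists_dotProduct_mulVec_neg
    (det_ne_zero_of_transpose_mul_add_mul_eq_neg_one (isSymm_lyapunovSolution hA)
      (transpose_mul_lyapunovSolution_add hA))

lemma lyapunovSolution_neg_one : lyapunovSolution (-1 : Matrix n n ℝ) = (2⁻¹ : ℝ) • 1 := by
  have hK : IsUnit (lyapunovMatrix (-1 : Matrix n n ℝ)) := by
    rw [lyapunovMatrix, transpose_neg, transpose_one, ← neg_one_smul ℝ (1 : Matrix n n ℝ),
      kronecker_smul, smul_kronecker, one_kronecker_one, ← add_smul,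
      ← Algebra.algebraMap_eq_smul_one]
    exact (isUnit_iff_ne_zero.mpr (by norm_num)).map _
  have h := transpose_mul_lyapunovSolution_add hK
  rw [transpose_neg, transpose_one, Matrix.neg_mul, Matrix.one_mul, Matrix.mul_neg,
    Matrix.mul_one, ← neg_add, neg_inj, ← two_smul ℝ] at h
  calc lyapunovSolution (-1) = (2⁻¹ : ℝ) • (2 : ℝ) • lyapunovSolution (-1 : Matrix n n ℝ) := by
        rw [smul_smul]; norm_num
    _ = (2⁻¹ : ℝ) • 1 := by rw [h]

lemma IsHurwitz.posDef_lyapunovSolution {A : Matrix n n ℝ} (hA : IsHurwitz A) :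
    (lyapunovSolution A).PosDef := by
  set D := {B : Matrix n n ℝ | IsUnit (lyapunovMatrix B)}
  set U := D ∩ lyapunovSolution ⁻¹' {Q | ∀ x ≠ 0, 0 < x ⬝ᵥ Q *ᵥ x}
  set V := D ∩ lyapunovSolution ⁻¹' {Q | ∃ x, x ⬝ᵥ Q *ᵥ x < 0}
  have hU : IsOpen U := continuousOn_lyapunovSolution.isOpen_inter_preimage
    isOpen_setOf_isUnit_lyapunovMatrix isOpen_setOf_forall_dotProduct_mulVec_pos
  have hV : IsOpen V := continuousOn_lyapunovSolution.isOpen_inter_preimage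
    isOpen_setOf_isUnit_lyapunovMatrix isOpen_setOf_exists_dotProduct_mulVec_neg
  have hUV : Disjoint U V := by
    refine Set.disjoint_left.mpr fun B ⟨_, hpos⟩ ⟨_, x, hx⟩ => ?_
    rcases eq_or_ne x 0 with rfl | hx0
    · simp at hx
    · exact (hpos x hx0).not_gt hx
  have hUV_cover : {B | IsHurwitz B} ⊆ U ∪ V := fun B hB => by
    have hK := hB.isUnit_lyapunovMatrix
    rcases posDef_or_exists_neg_of_isUnit_lyapunovMatrix hK with h | h
    · exact Or.inl ⟨hK, fun x hx => by simpa using h.dotProduct_mulVec_pos hx⟩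
    · exact Or.inr ⟨hK, h⟩
  have hneg : IsHurwitz (-1 : Matrix n n ℝ) := starConvex_setOf_isHurwitz.mem ⟨A, hA⟩
  have hnegU : (-1 : Matrix n n ℝ) ∈ U := by
    refine ⟨hneg.isUnit_lyapunovMatrix, fun x hx => ?_⟩
    simpa [lyapunovSolution_neg_one] using
      (PosDef.one.smul (by norm_num : (0 : ℝ) < 2⁻¹)).dotProduct_mulVec_pos hx
  have hHU := (starConvex_setOf_isHurwitz.isPathConnected hneg).isConnected.isPreconnected
    |>.subset_left_of_subset_union hU hV hUV hUV_cover ⟨-1, hneg, hnegU⟩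
  have hsymm := isSymm_lyapunovSolution hA.isUnit_lyapunovMatrix
  exact .of_dotProduct_mulVec_pos (isHermitian_iff_isSymm.mpr hsymm) fun x hx => by
    simpa using (hHU hA).2 x hx

theorem lyapunov_equation_unique_posdef_solution_general
    (m : ℕ) (M : Matrix (Fin m) (Fin m) ℝ) (hM : IsHurwitz M) :
    ∃! Q : Matrix (Fin m) (Fin m) ℝ,
      Q.IsSymm ∧ Q.PosDef ∧ Mᵀ * Q + Q * M = -(1 : Matrix (Fin m) (Fin m) ℝ) := by
  have hK := hM.isUnit_lyapunovMatrix
  refine ⟨lyapunovSolution M, ⟨isSymm_lyapunovSolution hK, hM.posDef_lyapunovSolution,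
    transpose_mul_lyapunovSolution_add hK⟩, fun Q ⟨_, _, hQ⟩ => ?_⟩
  exact injective_of_isUnit_lyapunovMatrix hK
    (hQ.trans (transpose_mul_lyapunovSolution_add hK).symm)

/-- Lyapunov theorem: for a Hurwitz matrix `M` there is a unique symmetric positive
definite `Q` with `Mᵀ Q + Q M = −I`. -/
theorem lyapunov_equation_unique_posdef_solution
    (m : ℕ) (hm : 1 ≤ m) (M : Matrix (Fin m) (Fin m) ℝ) (hM : IsHurwitz M) :
    ∃! Q : Matrix (Fin m) (Fin m) ℝ,
      Q.IsSymm ∧ Q.PosDef ∧ Mᵀ * Q + Q * M = -(1 : Matrix (Fin m) (Fin m) ℝ) :=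
  lyapunov_equation_unique_posdef_solution_general m M hM
end

section
/- Let n ≥ 1, A ∈ ℝ^{n×n}, C ∈ ℝ^{1×n}, L ∈ ℝ^{n×1}, c > 0, and suppose every complex eigenvalue of A+LC has negative real part. Let M = [[−(c+π²), C], [0, A+LC]] and suppose Q ∈ ℝ^{(n+1)×(n+1)} is a symmetric matrix, written in blocks Q = [[Q₁, Q₂], [Q₃, Q₄]] with Q₁ ∈ ℝ, Q₂ = Q₃ᵀ ∈ ℝ^{1×n}, Q₄ ∈ ℝ^{n×n}, satisfying Mᵀ Q + Q M = −I_{n+1}. Then the matrix (A+LC) − (c+π²) I_n is invertible, and Q₁ = 1/(2(c+π²)), Q₂ = Q₃ᵀ = −(1/(2(c+π²))) · C · ((A+LC) − (c+π²) I_n)^{−1}, and (A+LC)ᵀ Q₄ + Q₄ (A+LC) + Cᵀ Q₂ + Q₃ C = −I_n. -/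
open Matrix Polynomial

lemma charpoly_eval' {n : ℕ} (M : Matrix (Fin n) (Fin n) ℝ) (r : ℝ) :
    M.charpoly.eval r = (r • (1 : Matrix (Fin n) (Fin n) ℝ) - M).det := by
  rw [Matrix.charpoly, ← Polynomial.coe_evalRingHom, RingHom.map_det]
  congr 1
  ext i j
  by_cases h : i = j <;>
    simp [h, Matrix.charmatrix_apply, Matrix.one_apply, Matrix.diagonal_apply]

lemma hurwitz_unit {n : ℕ} {M : Matrix (Fin n) (Fin n) ℝ} (h : IsHurwitz M)
    {s : ℝ} (hs : 0 < s) : IsUnit (M - s • (1 : Matrix (Fin n) (Fin n) ℝ)) := by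
  rw [Matrix.isUnit_iff_isUnit_det, isUnit_iff_ne_zero]
  intro hdet
  have h1 : (s • (1 : Matrix (Fin n) (Fin n) ℝ) - M).det = 0 := by
    rw [← neg_sub M (s • (1 : Matrix (Fin n) (Fin n) ℝ)), Matrix.det_neg, hdet, mul_zero]
  have h2 : M.charpoly.eval s = 0 := by rw [charpoly_eval', h1]
  have h3 : aeval (algebraMap ℝ ℂ s) M.charpoly = 0 := by
    rw [Polynomial.aeval_algebraMap_apply_eq_algebraMap_eval, h2, map_zero]
  have := h _ h3
  simp at this
  linarith


/-- Explicit block form of the solution of the Lyapunov equation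
`Mᵀ Q + Q M = −I` for `M = [[−(c+π²), C], [0, A+LC]]` :
`(A+LC) − (c+π²)I` is invertible, `Q₁ = 1/(2(c+π²))`,
`Q₂ = Q₃ᵀ = −(1/(2(c+π²))) C ((A+LC) − (c+π²)I)⁻¹`, and
`(A+LC)ᵀ Q₄ + Q₄ (A+LC) + Cᵀ Q₂ + Q₃ C = −I`. -/
theorem lyapunov_solution_block_formulas
    (n : ℕ) (hn : 1 ≤ n)
    (A : Matrix (Fin n) (Fin n) ℝ) (C : Matrix (Fin 1) (Fin n) ℝ)
    (L : Matrix (Fin n) (Fin 1) ℝ) (c : ℝ) (hc : 0 < c)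
    (hALC : IsHurwitz (A + L * C))
    (Q₁ : Matrix (Fin 1) (Fin 1) ℝ) (Q₂ : Matrix (Fin 1) (Fin n) ℝ)
    (Q₃ : Matrix (Fin n) (Fin 1) ℝ) (Q₄ : Matrix (Fin n) (Fin n) ℝ)
    (hQ23 : Q₂ = Q₃ᵀ)
    (hQsymm : (Matrix.fromBlocks Q₁ Q₂ Q₃ Q₄).IsSymm)
    (hLyap :
      (Matrix.fromBlocks
          (Matrix.of fun _ _ => -(c + Real.pi ^ 2) : Matrix (Fin 1) (Fin 1) ℝ)
          C 0 (A + L * C))ᵀ * Matrix.fromBlocks Q₁ Q₂ Q₃ Q₄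
        + Matrix.fromBlocks Q₁ Q₂ Q₃ Q₄ *
          Matrix.fromBlocks
            (Matrix.of fun _ _ => -(c + Real.pi ^ 2) : Matrix (Fin 1) (Fin 1) ℝ)
            C 0 (A + L * C)
        = -(1 : Matrix (Fin 1 ⊕ Fin n) (Fin 1 ⊕ Fin n) ℝ)) :
    IsUnit ((A + L * C) - (c + Real.pi ^ 2) • (1 : Matrix (Fin n) (Fin n) ℝ)) ∧
    Q₁ 0 0 = 1 / (2 * (c + Real.pi ^ 2)) ∧
    Q₂ = (-(1 / (2 * (c + Real.pi ^ 2)))) •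
      (C * ((A + L * C) - (c + Real.pi ^ 2) • (1 : Matrix (Fin n) (Fin n) ℝ))⁻¹) ∧
    (A + L * C)ᵀ * Q₄ + Q₄ * (A + L * C) + Cᵀ * Q₂ + Q₃ * C
      = -(1 : Matrix (Fin n) (Fin n) ℝ) := by
  set s := c + Real.pi ^ 2 with hsdef
  have hs : 0 < s := by positivity
  set B := A + L * C with hBdef
  have hJ : (Matrix.of fun _ _ => -s : Matrix (Fin 1) (Fin 1) ℝ)
      = (-s) • (1 : Matrix (Fin 1) (Fin 1) ℝ) := by
    ext i j
    fin_cases i; fin_cases j; simp [Matrix.one_apply]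
  have hunit : IsUnit (B - s • (1 : Matrix (Fin n) (Fin n) ℝ)) := hurwitz_unit hALC hs
  -- decompose Lyapunov equation into blocks
  rw [hJ, Matrix.fromBlocks_transpose, Matrix.fromBlocks_multiply,
      Matrix.fromBlocks_multiply, Matrix.fromBlocks_add,
      show -(1 : Matrix (Fin 1 ⊕ Fin n) (Fin 1 ⊕ Fin n) ℝ)
        = Matrix.fromBlocks (-1) (-0) (-0) (-1) by
          rw [← Matrix.fromBlocks_neg, Matrix.fromBlocks_one],
      Matrix.fromBlocks_inj] at hLyap
  obtain ⟨e11, e12, e21, e22⟩ := hLyap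
  simp only [Matrix.transpose_neg, Matrix.transpose_smul, Matrix.transpose_one, Matrix.transpose_zero,
    Matrix.neg_mul, Matrix.mul_neg,
    Matrix.zero_mul, Matrix.mul_zero, add_zero, zero_add, Matrix.smul_mul,
    Matrix.mul_smul, Matrix.one_mul, Matrix.mul_one, neg_zero, neg_smul] at e11 e12 e21 e22
  -- Q₁
  have hQ1 : Q₁ = (1 / (2 * s)) • (1 : Matrix (Fin 1) (Fin 1) ℝ) := by
    have : (2 * s) • Q₁ = (1 : Matrix (Fin 1) (Fin 1) ℝ) := by
      have := e11
      rw [two_mul, add_smul]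
      linear_combination (norm := module) -this
    ext i j
    fin_cases i; fin_cases j
    have := congrFun (congrFun this 0) 0
    simp [Matrix.one_apply] at this ⊢
    field_simp
    linarith [this]
  have hQ1e : Q₁ 0 0 = 1 / (2 * s) := by rw [hQ1]; simp [Matrix.one_apply]
  -- Q₂
  have hQ2 : Q₂ * (B - s • (1 : Matrix (Fin n) (Fin n) ℝ)) = (-(1 / (2 * s))) • C := by
    rw [Matrix.mul_sub, Matrix.mul_smul, Matrix.mul_one]
    have h12 : -(s • Q₂) + (Q₁ * C + Q₂ * B) = 0 := e12
    rw [hQ1, Matrix.smul_mul, Matrix.one_mul] at h12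
    linear_combination (norm := module) h12
  have hQ2' : Q₂ = (-(1 / (2 * s))) •
      (C * (B - s • (1 : Matrix (Fin n) (Fin n) ℝ))⁻¹) := by
    have hinv := Matrix.mul_nonsing_inv _ ((Matrix.isUnit_iff_isUnit_det _).mp hunit)
    calc Q₂ = Q₂ * ((B - s • 1) * (B - s • 1)⁻¹) := by rw [hinv, Matrix.mul_one]
      _ = (Q₂ * (B - s • 1)) * (B - s • 1)⁻¹ := by rw [Matrix.mul_assoc]
      _ = _ := by rw [hQ2, Matrix.smul_mul]
  -- Q₄ equation
  refine ⟨hunit, hQ1e, hQ2', ?_⟩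
  have h22 : Cᵀ * Q₂ + Bᵀ * Q₄ + (Q₃ * C + Q₄ * B) = -1 := e22
  linear_combination (norm := module) h22
end

section
/- Let m ≥ 1, M ∈ ℝ^{m×m}, and let Q ∈ ℝ^{m×m} be symmetric positive definite with Mᵀ Q + Q M = −I_m. Denote by λmax(Q) and λmin(Q) the largest and smallest eigenvalues of Q. If x : [0,∞) → ℝᵐ is differentiable with x'(t) = M x(t) for all t ≥ 0, then for all t ≥ 0, |x(t)|² ≤ (λmax(Q)/λmin(Q)) · |x(0)|² · e^{−t/λmax(Q)}, where |·| is the Euclidean norm on ℝᵐ. -/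
open Matrix Set
open scoped InnerProductSpace

/-!
Along a solution of `x' = M x` the Lyapunov function `V = xᵀ Q x` satisfies `V' = -|x|²`, and
`V ≤ λmax(Q) |x|²`, so `V' ≤ -V / λmax(Q)` and Grönwall gives `V(t) ≤ V(0) e^{-t/λmax(Q)}`.
Sandwiching with the Rayleigh bounds `λmin(Q) |x|² ≤ V ≤ λmax(Q) |x|²` at times `t` and `0`
yields the estimate.
-/

namespace LinearMap.IsSymmetric

variable {E : Type*} [NormedAddCommGroup E] [InnerProductSpace ℝ E] [FiniteDimensional ℝ E]
  {T : E →ₗ[ℝ] E}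

theorem inner_map_self_eq_sum_eigenvalues (hT : T.IsSymmetric) {n : ℕ}
    (hn : Module.finrank ℝ E = n) (v : E) :
    ⟪T v, v⟫_ℝ = ∑ i, hT.eigenvalues hn i * ⟪hT.eigenvectorBasis hn i, v⟫_ℝ ^ 2 := by
  rw [← (hT.eigenvectorBasis hn).repr.inner_map_map, EuclideanSpace.inner_eq_star_dotProduct]
  simp only [dotProduct, star_trivial, eigenvectorBasis_apply_self_apply]
  simp only [OrthonormalBasis.repr_apply_apply, RCLike.ofReal_real_eq_id, id_eq]
  exact Finset.sum_congr rfl fun i _ ↦ by ring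

theorem inner_map_self_le_of_forall_hasEigenvalue_le (hT : T.IsSymmetric) {c : ℝ}
    (hc : ∀ μ, Module.End.HasEigenvalue T μ → μ ≤ c) (v : E) : ⟪T v, v⟫_ℝ ≤ c * ‖v‖ ^ 2 := by
  rw [hT.inner_map_self_eq_sum_eigenvalues rfl, ← (hT.eigenvectorBasis rfl).sum_sq_inner_right,
    Finset.mul_sum]
  gcongr with i
  exact hc _ (hT.hasEigenvalue_eigenvalues rfl i)

theorem le_inner_map_self_of_forall_le_hasEigenvalue (hT : T.IsSymmetric) {c : ℝ}
    (hc : ∀ μ, Module.End.HasEigenvalue T μ → c ≤ μ) (v : E) : c * ‖v‖ ^ 2 ≤ ⟪T v, v⟫_ℝ := by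
  rw [hT.inner_map_self_eq_sum_eigenvalues rfl, ← (hT.eigenvectorBasis rfl).sum_sq_inner_right,
    Finset.mul_sum]
  gcongr with i
  exact hc _ (hT.hasEigenvalue_eigenvalues rfl i)

end LinearMap.IsSymmetric

namespace Matrix

variable {n : Type*} [Fintype n]

theorem hasEigenvalue_toEuclideanLin_iff [DecidableEq n] {A : Matrix n n ℝ} {μ : ℝ} :
    Module.End.HasEigenvalue (toEuclideanLin A) μ ↔ ∃ v : n → ℝ, v ≠ 0 ∧ A *ᵥ v = μ • v := by
  simp only [Module.End.hasEigenvalue_iff, Submodule.ne_bot_iff, Module.End.mem_eigenspace_iff]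
  constructor
  · rintro ⟨v, hv, hv0⟩
    exact ⟨v.ofLp, by simpa using hv0, by simpa using congrArg WithLp.ofLp hv⟩
  · rintro ⟨v, hv0, hv⟩
    exact ⟨WithLp.toLp 2 v, by simp [hv], by simpa using hv0⟩

theorem dotProduct_mulVec_eq_inner_toEuclideanLin [DecidableEq n] (A : Matrix n n ℝ)
    (v : n → ℝ) :
    v ⬝ᵥ A *ᵥ v = ⟪toEuclideanLin A (WithLp.toLp 2 v), WithLp.toLp 2 v⟫_ℝ := by
  simp [EuclideanSpace.inner_eq_star_dotProduct]

theorem dotProduct_self_eq_norm_toLp_sq (v : n → ℝ) : v ⬝ᵥ v = ‖WithLp.toLp 2 v‖ ^ 2 := by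
  rw [← real_inner_self_eq_norm_sq, EuclideanSpace.inner_eq_star_dotProduct]
  simp

theorem IsHermitian.dotProduct_mulVec_le {A : Matrix n n ℝ} (hA : A.IsHermitian) {c : ℝ}
    (hc : c ∈ upperBounds {μ | ∃ v : n → ℝ, v ≠ 0 ∧ A *ᵥ v = μ • v}) (v : n → ℝ) :
    v ⬝ᵥ A *ᵥ v ≤ c * (v ⬝ᵥ v) := by
  classical
  have hT : (toEuclideanLin A).IsSymmetric := isSymmetric_toEuclideanLin_iff.mpr hA
  rw [dotProduct_mulVec_eq_inner_toEuclideanLin, dotProduct_self_eq_norm_toLp_sq]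
  exact hT.inner_map_self_le_of_forall_hasEigenvalue_le (fun μ hμ ↦ hc (hasEigenvalue_toEuclideanLin_iff.mp hμ)) _

theorem IsHermitian.le_dotProduct_mulVec {A : Matrix n n ℝ} (hA : A.IsHermitian) {c : ℝ}
    (hc : c ∈ lowerBounds {μ | ∃ v : n → ℝ, v ≠ 0 ∧ A *ᵥ v = μ • v}) (v : n → ℝ) :
    c * (v ⬝ᵥ v) ≤ v ⬝ᵥ A *ᵥ v := by
  classical
  have hT : (toEuclideanLin A).IsSymmetric := isSymmetric_toEuclideanLin_iff.mpr hA
  rw [dotProduct_mulVec_eq_inner_toEuclideanLin, dotProduct_self_eq_norm_toLp_sq]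
  exact hT.le_inner_map_self_of_forall_le_hasEigenvalue (fun μ hμ ↦ hc (hasEigenvalue_toEuclideanLin_iff.mp hμ)) _

theorem PosDef.pos_of_mulVec_eq_smul {A : Matrix n n ℝ} (hA : A.PosDef) {μ : ℝ} {v : n → ℝ}
    (hv : v ≠ 0) (hAv : A *ᵥ v = μ • v) : 0 < μ := by
  have hpos := hA.dotProduct_mulVec_pos hv
  rw [hAv, dotProduct_smul, smul_eq_mul, star_trivial] at hpos
  exact pos_of_mul_pos_left hpos (dotProduct_self_star_pos_iff.mpr hv).le

end Matrix

theorem hasDerivWithinAt_dotProduct {ι : Type*} [Fintype ι] {f g : ℝ → ι → ℝ} {f' g' : ι → ℝ}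
    {s : Set ℝ} {t : ℝ} (hf : HasDerivWithinAt f f' s t) (hg : HasDerivWithinAt g g' s t) :
    HasDerivWithinAt (fun t ↦ f t ⬝ᵥ g t) (f' ⬝ᵥ g t + f t ⬝ᵥ g') s t := by
  simp only [dotProduct, ← Finset.sum_add_distrib]
  exact HasDerivWithinAt.fun_sum fun i _ ↦
    (hasDerivWithinAt_pi.mp hf i).mul (hasDerivWithinAt_pi.mp hg i)

theorem hasDerivWithinAt_mulVec {ι κ : Type*} [Fintype ι] [Fintype κ] (A : Matrix ι κ ℝ)
    {f : ℝ → κ → ℝ} {f' : κ → ℝ} {s : Set ℝ} {t : ℝ} (hf : HasDerivWithinAt f f' s t) :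
    HasDerivWithinAt (fun t ↦ A *ᵥ f t) (A *ᵥ f') s t :=
  ((mulVecLin A).toContinuousLinearMap.hasFDerivAt (x := f t)).comp_hasDerivWithinAt t hf

theorem hasDerivWithinAt_dotProduct_mulVec_of_lyapunov {ι : Type*} [Fintype ι] [DecidableEq ι]
    {M Q : Matrix ι ι ℝ} (hLyap : Mᵀ * Q + Q * M = -1) {x : ℝ → ι → ℝ} {s : Set ℝ} {t : ℝ}
    (hx : HasDerivWithinAt x (M *ᵥ x t) s t) :
    HasDerivWithinAt (fun t ↦ x t ⬝ᵥ Q *ᵥ x t) (-(x t ⬝ᵥ x t)) s t := by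
  have hderiv : M *ᵥ x t ⬝ᵥ Q *ᵥ x t + x t ⬝ᵥ Q *ᵥ (M *ᵥ x t)
      = x t ⬝ᵥ (Mᵀ * Q + Q * M) *ᵥ x t := by
    rw [add_mulVec, dotProduct_add, ← mulVec_mulVec, ← mulVec_mulVec, dotProduct_mulVec (x t) Mᵀ,
      vecMul_transpose]
  rw [hLyap, neg_mulVec, one_mulVec, dotProduct_neg] at hderiv
  exact hderiv ▸ hasDerivWithinAt_dotProduct hx (hasDerivWithinAt_mulVec Q hx)

theorem le_mul_exp_of_hasDerivWithinAt_le_mul {f f' : ℝ → ℝ} {K a : ℝ}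
    (hf : ∀ t ∈ Ici a, HasDerivWithinAt f (f' t) (Ici a) t)
    (bound : ∀ t ∈ Ici a, f' t ≤ K * f t) {t : ℝ} (ht : a ≤ t) :
    f t ≤ f a * Real.exp (K * (t - a)) := by
  rw [← gronwallBound_ε0]
  refine le_gronwallBound_of_liminf_deriv_right_le (f' := f') ?_ ?_ le_rfl ?_ t ⟨ht, le_rfl⟩
  · exact fun s hs ↦ (hf s hs.1).continuousWithinAt.mono Icc_subset_Ici_self
  · exact fun s hs r hr ↦
      ((hf s hs.1).mono (Ici_subset_Ici.mpr hs.1)).liminf_right_slope_le hr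
  · simpa using fun s hs _ ↦ bound s hs

theorem lyapunov_decay_estimate_general
    (m : ℕ) (M Q : Matrix (Fin m) (Fin m) ℝ)
    (hQ : Q.PosDef)
    (hLyap : Mᵀ * Q + Q * M = -(1 : Matrix (Fin m) (Fin m) ℝ))
    (lmax lmin : ℝ)
    (hlmax : IsGreatest {t : ℝ | ∃ v : Fin m → ℝ, v ≠ 0 ∧ Q.mulVec v = t • v} lmax)
    (hlmin : IsLeast {t : ℝ | ∃ v : Fin m → ℝ, v ≠ 0 ∧ Q.mulVec v = t • v} lmin)
    (x : ℝ → Fin m → ℝ)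
    (hx : ∀ t ∈ Ici (0:ℝ), HasDerivWithinAt x (M.mulVec (x t)) (Ici 0) t) :
    ∀ t ∈ Ici (0:ℝ),
      ∑ i, (x t i) ^ 2
        ≤ (lmax / lmin) * (∑ i, (x 0 i) ^ 2) * Real.exp (-(t / lmax)) := by
  intro t ht
  have hupper := hQ.1.dotProduct_mulVec_le hlmax.2
  have hlower := hQ.1.le_dotProduct_mulVec hlmin.2
  obtain ⟨v, hv, hQv⟩ := hlmin.1
  have hlmin_pos : 0 < lmin := hQ.pos_of_mulVec_eq_smul hv hQv
  have hlmax_pos : 0 < lmax := hlmin_pos.trans_le (hlmax.2 hlmin.1)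
  have hdecay : x t ⬝ᵥ Q *ᵥ x t ≤ x 0 ⬝ᵥ Q *ᵥ x 0 * Real.exp (-(t / lmax)) := by
    have := le_mul_exp_of_hasDerivWithinAt_le_mul (K := -lmax⁻¹)
      (fun s hs ↦ hasDerivWithinAt_dotProduct_mulVec_of_lyapunov hLyap (hx s hs))
      (fun s _ ↦ by rw [neg_mul, neg_le_neg_iff, inv_mul_le_iff₀ hlmax_pos]; exact hupper (x s)) ht
    rwa [sub_zero, neg_mul, inv_mul_eq_div] at this
  have hsq : ∀ s, ∑ i, x s i ^ 2 = x s ⬝ᵥ x s := fun s ↦ by simp [dotProduct, sq]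
  rw [hsq, hsq, div_mul_eq_mul_div, div_mul_eq_mul_div, le_div_iff₀ hlmin_pos]
  calc x t ⬝ᵥ x t * lmin
      ≤ x 0 ⬝ᵥ Q *ᵥ x 0 * Real.exp (-(t / lmax)) := by linarith [hlower (x t)]
    _ ≤ lmax * (x 0 ⬝ᵥ x 0) * Real.exp (-(t / lmax)) := by gcongr; exact hupper (x 0)

/-- Lyapunov decay estimate: if `Q` is symmetric positive definite with
`Mᵀ Q + Q M = −I` and `x' = M x` on `[0,∞)`, then
`|x(t)|² ≤ (λmax(Q)/λmin(Q)) |x(0)|² e^{−t/λmax(Q)}` (Euclidean norm). -/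
theorem lyapunov_decay_estimate
    (m : ℕ) (hm : 1 ≤ m) (M Q : Matrix (Fin m) (Fin m) ℝ)
    (hQsymm : Q.IsSymm) (hQ : Q.PosDef)
    (hLyap : Mᵀ * Q + Q * M = -(1 : Matrix (Fin m) (Fin m) ℝ))
    (lmax lmin : ℝ)
    (hlmax : IsGreatest {t : ℝ | ∃ v : Fin m → ℝ, v ≠ 0 ∧ Q.mulVec v = t • v} lmax)
    (hlmin : IsLeast {t : ℝ | ∃ v : Fin m → ℝ, v ≠ 0 ∧ Q.mulVec v = t • v} lmin)
    (x : ℝ → Fin m → ℝ)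
    (hx : ∀ t ∈ Ici (0:ℝ), HasDerivWithinAt x (M.mulVec (x t)) (Ici 0) t) :
    ∀ t ∈ Ici (0:ℝ),
      ∑ i, (x t i) ^ 2
        ≤ (lmax / lmin) * (∑ i, (x 0 i) ^ 2) * Real.exp (-(t / lmax)) :=
  lyapunov_decay_estimate_general m M Q hQ hLyap lmax lmin hlmax hlmin x hx
end
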